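/- Let A ∈ ℝ^{s×m}. Then there exists y ∈ ℝ^m with Ay < 0 (componentwise strict inequality) if and only if u = 0 is the only vector u ∈ ℝ^s with u ≥ 0 and Aᵀu = 0. -/

import Mathlib

/-!
If `0` is not a convex combination of the rows `aᵢ` of `A`, Hahn–Banach separates `0` from their
(compact) convex hull by a functional `f`, and `y := -f` gives `Ay < 0`; conversely a convex
combination `∑ wᵢ aᵢ = 0` is exactly a nonzero `w ≥ 0` with `Aᵀw = 0`. The two alternatives exclude
each other because `u ⬝ᵥ Ay = Aᵀu ⬝ᵥ y = 0` is a sum of nonpositive terms.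
-/

open Set Matrix

theorem convexHull_range_eq_image_stdSimplex {R E ι : Type*} [Field R] [LinearOrder R]
    [IsStrictOrderedRing R] [AddCommGroup E] [Module R E] [Fintype ι] (a : ι → E) :
    convexHull R (range a) = (fun w : ι → R ↦ ∑ i, w i • a i) '' stdSimplex R ι := by
  classical
  have hL : (fun w : ι → R ↦ ∑ i, w i • a i) = Fintype.linearCombination R a := by
    ext w
    simp [Fintype.linearCombination_apply]
  rw [← convexHull_rangle_single_eq_stdSimplex, hL,
    (Fintype.linearCombination R a).image_convexHull, ← range_comp]
  congr
  ext i
  simp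

theorem exists_strongDual_neg_of_zero_notMem_convexHull {E ι : Type*} [TopologicalSpace E]
    [AddCommGroup E] [Module ℝ E] [IsTopologicalAddGroup E] [ContinuousSMul ℝ E]
    [LocallyConvexSpace ℝ E] [T2Space E] [Finite ι] {a : ι → E}
    (h : (0 : E) ∉ convexHull ℝ (range a)) : ∃ f : StrongDual ℝ E, ∀ i, f (a i) < 0 := by
  obtain ⟨f, c, hf0, hc⟩ := geometric_hahn_banach_point_closed (convex_convexHull ℝ _)
    ((finite_range a).isClosed_convexHull ℝ) h
  rw [map_zero] at hf0
  exact ⟨-f, fun i ↦ neg_neg_of_pos (hf0.trans (hc _ (subset_convexHull ℝ _ (mem_range_self i))))⟩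

namespace Matrix

variable {ι n : Type*} [Fintype ι] [Fintype n] (A : Matrix ι n ℝ)

theorem eq_zero_of_mulVec_neg_of_transpose_mulVec_eq_zero {y : n → ℝ} (hy : ∀ i, (A *ᵥ y) i < 0)
    {u : ι → ℝ} (hu : ∀ i, 0 ≤ u i) (hAu : Aᵀ *ᵥ u = 0) : u = 0 := by
  have hdot : ∑ i, u i * (A *ᵥ y) i = 0 := by
    rw [← dotProduct, dotProduct_mulVec, ← mulVec_transpose, hAu, zero_dotProduct]
  have hterm : ∀ i ∈ Finset.univ, u i * (A *ᵥ y) i ≤ 0 := fun i _ ↦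
    mul_nonpos_of_nonneg_of_nonpos (hu i) (hy i).le
  ext i
  have hi := (Finset.sum_eq_zero_iff_of_nonpos hterm).mp hdot i (Finset.mem_univ i)
  exact (mul_eq_zero.mp hi).resolve_right (hy i).ne

theorem exists_mulVec_neg_of_zero_notMem_convexHull
    (h : (0 : n → ℝ) ∉ convexHull ℝ (range fun i ↦ A i)) :
    ∃ y : n → ℝ, ∀ i, (A *ᵥ y) i < 0 := by
  classical
  obtain ⟨f, hf⟩ := exists_strongDual_neg_of_zero_notMem_convexHull h
  refine ⟨fun j ↦ f fun k ↦ if j = k then 1 else 0, fun i ↦ ?_⟩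
  convert hf i using 1
  rw [← f.coe_coe, LinearMap.pi_apply_eq_sum_univ]
  simp [mulVec, dotProduct]

end Matrix

theorem stmt_4 {s m : ℕ} (A : Matrix (Fin s) (Fin m) ℝ) :
    (∃ y : Fin m → ℝ, ∀ i, A.mulVec y i < 0) ↔
      (∀ u : Fin s → ℝ, (∀ i, 0 ≤ u i) → A.transpose.mulVec u = 0 → u = 0) := by
  constructor
  · rintro ⟨y, hy⟩ u hu hAu
    exact A.eq_zero_of_mulVec_neg_of_transpose_mulVec_eq_zero hy hu hAu
  · intro H
    by_contra hno
    have h0 : (0 : Fin m → ℝ) ∈ convexHull ℝ (range fun i ↦ A i) :=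
      not_not.mp fun h0 ↦ hno (A.exists_mulVec_neg_of_zero_notMem_convexHull h0)
    rw [convexHull_range_eq_image_stdSimplex] at h0
    obtain ⟨w, ⟨hw0, hw1⟩, hwA⟩ := h0
    have hw : w = 0 := H w hw0 (by rwa [mulVec_transpose, vecMul_eq_sum])
    simp [hw] at hw1
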